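/- Let d ∈ ℕ, p, r ∈ (0,∞), β ∈ ℝ, μ, ν ∈ (−∞,0], and δ ∈ (0,1) with βp + d + (νp/max{r,p})(1−δ) < 0. Then there is a constant C > 0 depending only on d, p, β, μ, ν, r, δ such that for all families (ξ_{j,t,m}) of real numbers and (λ_{j,t,m}) of numbers in {0,1} (indexed by ℕ₀ × {F,M}^d × ℤ^d), all j ∈ ℕ₀ and t ∈ {F,M}^d: Z̃_{j,t} := (Σ_{m∈ℤ^d} (1 + ‖m‖_∞/2^j)^{βp} λ_{j,t,m} |ξ_{j,t,m}|^p)^{1/p} ≤ C · 2^{jd/p + j(μ/max{r,p})(1−δ)} · Ξ̃^{1/p} (an inequality in [0,∞]). -/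

import Mathlib

open MeasureTheory ProbabilityTheory ENNReal

noncomputable section

/-- The sup-norm `‖m‖_∞` of a lattice point `m ∈ ℤ^d`, as a real number. -/
def znorm {d : ℕ} (m : Fin d → ℤ) : ℝ :=
  ((Finset.univ.sup fun i => (m i).natAbs : ℕ) : ℝ)

/-- `M_j = (2^{j+1}+1)^d`. -/
def Mnum (d j : ℕ) : ℕ := (2 ^ (j + 1) + 1) ^ d

/-- `N_j = M_{j+1} - M_j`. -/
def Nnum (d j : ℕ) : ℕ := Mnum d (j + 1) - Mnum d j

/-- The `ℓ^p`-norm (with values in `[0,∞]`) of a family of values in `[0,∞]`,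
for `p ∈ (0,∞]`. -/
def lpNorm (p : ℝ≥0∞) {ι : Type*} (x : ι → ℝ≥0∞) : ℝ≥0∞ :=
  if p = ∞ then ⨆ i, x i else (∑' i, x i ^ p.toReal) ^ (1 / p.toReal)

/-- The index set `{(j,t) : j ∈ ℕ₀, t ∈ T_j}` where `T_0 = {F}^d` and
`T_j = {F,M}^d \ {F}^d` for `j ≥ 1`; here `F = false`, `M = true`. -/
def JIdx (d : ℕ) : Type :=
  {jt : ℕ × (Fin d → Bool) // (jt.2 = fun _ => false) ↔ jt.1 = 0}

/-- The Besov sequence (quasi-)norm `‖a‖_{b^s_{p,q}}`, with values in `[0,∞]`,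
where `d/p` is read as `0` for `p = ∞`. -/
def besovNorm (d : ℕ) (s : ℝ) (p q : ℝ≥0∞)
    (a : ℕ → (Fin d → Bool) → (Fin d → ℤ) → ℝ) : ℝ≥0∞ :=
  lpNorm q (fun jt : JIdx d =>
    ENNReal.ofReal ((2 : ℝ) ^ ((jt.1.1 : ℝ) * (s + d / 2 - d * (p⁻¹).toReal))) *
      lpNorm p fun m : Fin d → ℤ => ENNReal.ofReal |a jt.1.1 jt.1.2 m|)

/-- The deterministic coefficient `2^{jα} (j+1)^θ (1+‖m‖_∞/2^j)^{β+(γ-β)𝟙_{j=0}}`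
of the Besov sequence prior. -/
def priorCoef (d : ℕ) (α β γ θ : ℝ) (j : ℕ) (m : Fin d → ℤ) : ℝ :=
  (2 : ℝ) ^ ((j : ℝ) * α) * ((j : ℝ) + 1) ^ θ *
    (1 + znorm m / 2 ^ j) ^ (if j = 0 then γ else β)

/-- The deterministic coefficient `2^{jα} (1+‖m‖_∞/2^j)^{β+(γ-β)𝟙_{j=0}}`
of the Bernoulli–Besov sequence prior. -/
def priorCoefB (d : ℕ) (α β γ : ℝ) (j : ℕ) (m : Fin d → ℤ) : ℝ :=
  (2 : ℝ) ^ ((j : ℝ) * α) * (1 + znorm m / 2 ^ j) ^ (if j = 0 then γ else β)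

/-- The Bernoulli success probability `ϱ_{j,m} = 2^{jμ}(1+‖m‖_∞/2^j)^ν`. -/
def rhoB (d : ℕ) (μ' ν : ℝ) (j : ℕ) (m : Fin d → ℤ) : ℝ :=
  (2 : ℝ) ^ ((j : ℝ) * μ') * (1 + znorm m / 2 ^ j) ^ ν

/-- Property A. -/
def PropertyA (d : ℕ) (s α β γ θ : ℝ) (p q : ℝ≥0∞) : Prop :=
  (if p = ∞ then γ ≤ 0 else γ < -((d : ℝ) / p.toReal)) ∧
  (if p = ∞ then β ≤ 0 else β < -((d : ℝ) / p.toReal)) ∧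
  (s + d / 2 + α < 0 ∨
    (s + d / 2 + α = 0 ∧ (if q = ∞ then θ ≤ 0 else θ < -(1 / q.toReal))))

/-- Property A'. -/
def PropertyA' (d : ℕ) (s α β γ μ' ν : ℝ) (p q : ℝ≥0∞) : Prop :=
  if p = ∞ then
    γ ≤ 0 ∧ β ≤ 0 ∧
      (if q = ∞ then s + d / 2 + α ≤ 0 else s + d / 2 + α < 0)
  else
    γ + (d + ν) / p.toReal < 0 ∧ β + (d + ν) / p.toReal < 0 ∧
      (if q = ∞ then s + d / 2 + α + μ' / p.toReal ≤ 0
        else s + d / 2 + α + μ' / p.toReal < 0)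

/-- Property A''. -/
def PropertyA'' (d : ℕ) (s α β γ μ' ν r : ℝ) (p : ℝ≥0∞) : Prop :=
  if p = ∞ then γ ≤ 0 ∧ β ≤ 0 ∧ s + d / 2 + α ≤ 0
  else
    γ + (d : ℝ) / p.toReal + ν / max r p.toReal < 0 ∧
    β + (d : ℝ) / p.toReal + ν / max r p.toReal < 0 ∧
    s + (d : ℝ) / 2 + α + μ' / max r p.toReal < 0

/-- The quantity `Ξ = max_t Ξ_t` from the master lemma, for a deterministic family `ξ`,
an exponent `pr ∈ (0,∞)` and an enumeration `φ` of `ℤ^d`. -/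
def XiQ (d : ℕ) (pr : ℝ) (φ : ℕ → Fin d → ℤ)
    (ξ : ℕ → (Fin d → Bool) → (Fin d → ℤ) → ℝ) : ℝ≥0∞ :=
  ⨆ t : Fin d → Bool, ⨆ j : ℕ,
    (ENNReal.ofReal ((Mnum d j : ℝ)⁻¹ *
        ∑ τ ∈ Finset.range (Mnum d j), |ξ j t (φ τ)| ^ pr) +
      ⨆ ℓ : ℕ, ⨆ _ : j ≤ ℓ,
        ENNReal.ofReal ((Nnum d ℓ : ℝ)⁻¹ *
          ∑ τ ∈ Finset.Ico (Mnum d ℓ) (Mnum d (ℓ + 1)), |ξ j t (φ τ)| ^ pr))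

/-- The quantity `Ξ̃ = max_t Ξ̃_t` from the Bernoulli master lemma. -/
def XiB (d : ℕ) (pr r μ' ν δ : ℝ) (φ : ℕ → Fin d → ℤ)
    (lam ξ : ℕ → (Fin d → Bool) → (Fin d → ℤ) → ℝ) : ℝ≥0∞ :=
  ⨆ t : Fin d → Bool, ⨆ j : ℕ,
    (ENNReal.ofReal ((Mnum d j : ℝ)⁻¹ *
        ∑ τ ∈ Finset.range (Mnum d j),
          rhoB d μ' ν j (φ τ) ^ (pr / max r pr * (δ - 1)) * lam j t (φ τ) *
            |ξ j t (φ τ)| ^ pr) +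
      ⨆ ℓ : ℕ, ⨆ _ : j ≤ ℓ,
        ENNReal.ofReal ((Nnum d ℓ : ℝ)⁻¹ *
          ∑ τ ∈ Finset.Ico (Mnum d ℓ) (Mnum d (ℓ + 1)),
            rhoB d μ' ν j (φ τ) ^ (pr / max r pr * (δ - 1)) * lam j t (φ τ) *
              |ξ j t (φ τ)| ^ pr))

/-- `exp(c · x^r)` for `x ∈ [0,∞]`, equal to `∞` for `x = ∞`. -/
def expENN (c r : ℝ) (x : ℝ≥0∞) : ℝ≥0∞ :=
  if x = ∞ then ∞ else ENNReal.ofReal (Real.exp (c * x.toReal ^ r))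


private lemma znorm_nonneg' {d : ℕ} (m : Fin d → ℤ) : 0 ≤ znorm m := Nat.cast_nonneg _

private lemma y_pos {d : ℕ} (m : Fin d → ℤ) (j : ℕ) : (0:ℝ) < 1 + znorm m / 2 ^ j :=
  add_pos_of_pos_of_nonneg one_pos (div_nonneg (znorm_nonneg' _) (by positivity))

private lemma y_one {d : ℕ} (m : Fin d → ℤ) (j : ℕ) : (1:ℝ) ≤ 1 + znorm m / 2 ^ j :=
  le_add_of_nonneg_right (div_nonneg (znorm_nonneg' _) (by positivity))

private lemma rhoB_pos (d : ℕ) (μ' ν : ℝ) (j : ℕ) (m : Fin d → ℤ) : 0 < rhoB d μ' ν j m :=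
  mul_pos (Real.rpow_pos_of_pos two_pos _) (Real.rpow_pos_of_pos (y_pos m j) _)

private lemma MnumPos (d j : ℕ) : 0 < Mnum d j := pow_pos (by positivity) d

private lemma MnumMono (d : ℕ) (hd : 0 < d) {a b : ℕ} (h : a < b) : Mnum d a < Mnum d b := by
  apply Nat.pow_lt_pow_left _ hd.ne'
  have : (2:ℕ)^(a+1) < 2^(b+1) := Nat.pow_lt_pow_right (by norm_num) (by omega)
  omega

private lemma NnumPos (d : ℕ) (hd : 0 < d) (ℓ : ℕ) : 0 < Nnum d ℓ :=
  Nat.sub_pos_of_lt (MnumMono d hd (Nat.lt_succ_self ℓ))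

private lemma card_box (d R : ℕ) :
    (Finset.Icc (fun _ : Fin d => -(R:ℤ)) fun _ => (R:ℤ)).card = (2*R+1)^d := by
  rw [Pi.card_Icc]
  simp only [Int.card_Icc]
  rw [Finset.prod_const, Finset.card_univ, Fintype.card_fin]
  congr 1
  omega

private lemma znorm_ge {d : ℕ} (φ : ℕ → Fin d → ℤ) (hb : Function.Bijective φ)
    (hm : Monotone fun τ => znorm (φ τ)) {ℓ τ : ℕ} (h : Mnum d ℓ ≤ τ) :
    (2:ℝ)^ℓ ≤ znorm (φ τ) := by
  by_contra hlt
  push_neg at hlt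
  have hsub : (Finset.range (τ+1)).image φ ⊆
      Finset.Icc (fun _ : Fin d => -((2^ℓ:ℕ):ℤ)) fun _ => ((2^ℓ:ℕ):ℤ) := by
    intro m hmem
    obtain ⟨σ, hσ, rfl⟩ := Finset.mem_image.mp hmem
    have h1 : znorm (φ σ) < (2:ℝ)^ℓ :=
      lt_of_le_of_lt (hm (Nat.lt_succ_iff.mp (Finset.mem_range.mp hσ))) hlt
    have h2 : (Finset.univ.sup fun i => ((φ σ) i).natAbs) < 2^ℓ := by
      have h3 : ((Finset.univ.sup fun i => ((φ σ) i).natAbs : ℕ) : ℝ) < ((2^ℓ : ℕ) : ℝ) := by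
        push_cast
        exact h1
      exact_mod_cast h3
    rw [Finset.mem_Icc]
    refine ⟨fun i => ?_, fun i => ?_⟩ <;>
    · have h4 : ((φ σ) i).natAbs < 2^ℓ :=
        lt_of_le_of_lt (Finset.le_sup (f := fun i => ((φ σ) i).natAbs) (Finset.mem_univ i)) h2
      simp only []
      omega
  have hcard : τ + 1 ≤ (2*2^ℓ+1)^d := by
    calc τ + 1 = ((Finset.range (τ+1)).image φ).card := by
          rw [Finset.card_image_of_injective _ hb.1, Finset.card_range]
      _ ≤ _ := Finset.card_le_card hsub
      _ = (2*2^ℓ+1)^d := card_box d (2^ℓ)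
  have hM : Mnum d ℓ = (2*2^ℓ+1)^d := by rw [Mnum]; ring_nf
  omega

/-- Bernoulli master lemma. Let `p, r ∈ (0,∞)`, `β ∈ ℝ`,
`μ, ν ∈ (-∞,0]`, `δ ∈ (0,1)` with `βp + d + (νp/max{r,p})(1-δ) < 0`. There is `C > 0`
depending only on `d, p, β, μ, ν, r, δ` such that for all families `(ξ_{j,t,m})` of reals
and `(λ_{j,t,m})` of numbers in `{0,1}`, all `j` and `t`,
`Z̃_{j,t} ≤ C · 2^{jd/p + j(μ/max{r,p})(1-δ)} · Ξ̃^{1/p}`. -/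
theorem stmt5 (d : ℕ) (hd : 0 < d) (p r β μ' ν δ : ℝ)
    (hp : 0 < p) (hr : 0 < r) (hμ : μ' ≤ 0) (hν : ν ≤ 0)
    (hδ0 : 0 < δ) (hδ1 : δ < 1)
    (hcond : β * p + d + ν * p / max r p * (1 - δ) < 0) :
    ∃ C : ℝ, 0 < C ∧
      ∀ φ : ℕ → Fin d → ℤ, Function.Bijective φ →
        Monotone (fun τ => znorm (φ τ)) →
        ∀ lam ξ : ℕ → (Fin d → Bool) → (Fin d → ℤ) → ℝ,
          (∀ j t m, lam j t m = 0 ∨ lam j t m = 1) →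
          ∀ (j : ℕ) (t : Fin d → Bool),
            (∑' m : Fin d → ℤ,
                ENNReal.ofReal
                  ((1 + znorm m / 2 ^ j) ^ (β * p) * lam j t m * |ξ j t m| ^ p)) ^ (1 / p)
              ≤ ENNReal.ofReal C *
                  ENNReal.ofReal
                    ((2 : ℝ) ^ ((j : ℝ) * d / p + (j : ℝ) * (μ' / max r p) * (1 - δ))) *
                  XiB d p r μ' ν δ φ lam ξ ^ (1 / p) := by
  have hP : (0:ℝ) < max r p := lt_of_lt_of_le hp (le_max_right r p)
  set κ := p / max r p * (δ - 1) with hκdef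
  set η := β * p + ν * p / max r p * (1 - δ) with hηdef
  have hd1 : (1:ℝ) ≤ d := by exact_mod_cast hd
  have hηd : η + d < 0 := by rw [hηdef]; linarith
  have hη0 : η ≤ 0 := by linarith
  set x := (2:ℝ) ^ (η + (d:ℝ)) with hxdef
  have hx0 : 0 < x := Real.rpow_pos_of_pos two_pos _
  have hx1 : x < 1 := Real.rpow_lt_one_of_one_lt_of_neg one_lt_two hηd
  have h1x : 0 < 1 - x := by linarith
  set C₀ := (3:ℝ)^d * (1 + 2^d * (1 - x)⁻¹) with hC₀def
  have hC₀ : 0 < C₀ := by positivity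
  refine ⟨C₀ ^ (1/p), Real.rpow_pos_of_pos hC₀ _, ?_⟩
  intro φ hbij hmono lam ξ hlam j t
  set Xi := XiB d p r μ' ν δ φ lam ξ with hXidef
  set g : ℕ → ℝ := fun τ =>
    rhoB d μ' ν j (φ τ) ^ (p / max r p * (δ - 1)) * lam j t (φ τ) * |ξ j t (φ τ)| ^ p
    with hgdef
  have hlam0 : ∀ τ, 0 ≤ lam j t (φ τ) := by
    intro τ; rcases hlam j t (φ τ) with h|h <;> simp [h]
  have hg0 : ∀ τ, 0 ≤ g τ := by
    intro τ
    exact mul_nonneg (mul_nonneg (Real.rpow_nonneg (rhoB_pos d μ' ν j (φ τ)).le _) (hlam0 τ))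
      (Real.rpow_nonneg (abs_nonneg _) _)
  -- extraction from Xi
  have hA : ENNReal.ofReal ((Mnum d j : ℝ)⁻¹ * ∑ τ ∈ Finset.range (Mnum d j), g τ) ≤ Xi :=
    le_iSup_of_le t (le_iSup_of_le j le_self_add)
  have hB : ∀ i : ℕ,
      ENNReal.ofReal ((Nnum d (j+i) : ℝ)⁻¹ *
        ∑ τ ∈ Finset.Ico (Mnum d (j+i)) (Mnum d (j+i+1)), g τ) ≤ Xi := by
    intro i
    refine le_iSup_of_le t (le_iSup_of_le j (le_trans ?_ le_add_self))
    exact le_iSup_of_le (j+i) (le_iSup_of_le (Nat.le_add_right j i) le_rfl)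
  have keyA : ENNReal.ofReal (∑ τ ∈ Finset.range (Mnum d j), g τ)
      ≤ ENNReal.ofReal (Mnum d j : ℝ) * Xi := by
    have hM0 : (0:ℝ) < (Mnum d j : ℝ) := by exact_mod_cast MnumPos d j
    have he : (∑ τ ∈ Finset.range (Mnum d j), g τ)
        = (Mnum d j : ℝ) * ((Mnum d j : ℝ)⁻¹ * ∑ τ ∈ Finset.range (Mnum d j), g τ) := by
      rw [← mul_assoc, mul_inv_cancel₀ hM0.ne', one_mul]
    rw [he, ENNReal.ofReal_mul hM0.le]
    exact mul_le_mul_right hA _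
  have keyB : ∀ i : ℕ,
      ENNReal.ofReal (∑ τ ∈ Finset.Ico (Mnum d (j+i)) (Mnum d (j+i+1)), g τ)
      ≤ ENNReal.ofReal (Nnum d (j+i) : ℝ) * Xi := by
    intro i
    have hN0 : (0:ℝ) < (Nnum d (j+i) : ℝ) := by exact_mod_cast NnumPos d hd (j+i)
    have he : (∑ τ ∈ Finset.Ico (Mnum d (j+i)) (Mnum d (j+i+1)), g τ)
        = (Nnum d (j+i) : ℝ) * ((Nnum d (j+i) : ℝ)⁻¹ *
            ∑ τ ∈ Finset.Ico (Mnum d (j+i)) (Mnum d (j+i+1)), g τ) := by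
      rw [← mul_assoc, mul_inv_cancel₀ hN0.ne', one_mul]
    rw [he, ENNReal.ofReal_mul hN0.le]
    exact mul_le_mul_right (hB i) _
  -- the weighted sum
  set F : ℕ → ℝ≥0∞ := fun τ =>
    ENNReal.ofReal ((1 + znorm (φ τ) / 2 ^ j) ^ η * g τ) with hFdef
  have hF1 : ∀ τ, F τ ≤ ENNReal.ofReal (g τ) := by
    intro τ
    apply ENNReal.ofReal_le_ofReal
    exact mul_le_of_le_one_left (hg0 τ)
      (Real.rpow_le_one_of_one_le_of_nonpos (y_one (φ τ) j) hη0)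
  have hF2 : ∀ i τ, Mnum d (j+i) ≤ τ →
      F τ ≤ ENNReal.ofReal ((2:ℝ) ^ ((i:ℝ) * η) * g τ) := by
    intro i τ hτ
    apply ENNReal.ofReal_le_ofReal
    apply mul_le_mul_of_nonneg_right _ (hg0 τ)
    have hz := znorm_ge φ hbij hmono hτ
    have h2i : (2:ℝ)^(i:ℕ) ≤ 1 + znorm (φ τ) / 2 ^ j := by
      have hle : (2:ℝ)^(i:ℕ) ≤ znorm (φ τ) / 2 ^ j := by
        rw [le_div_iff₀ (by positivity : (0:ℝ) < 2 ^ j)]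
        calc (2:ℝ)^i * 2^j = 2^(j+i) := by rw [← pow_add]; ring_nf
          _ ≤ znorm (φ τ) := hz
      linarith
    calc (1 + znorm (φ τ) / 2 ^ j) ^ η ≤ ((2:ℝ)^(i:ℕ)) ^ η :=
          Real.rpow_le_rpow_of_nonpos (by positivity) h2i hη0
      _ = (2:ℝ) ^ ((i:ℝ) * η) := by
          rw [← Real.rpow_natCast 2 i, ← Real.rpow_mul (by norm_num : (0:ℝ) ≤ 2)]
  have hstep : ∀ k : ℕ, ∑ τ ∈ Finset.range (Mnum d (j+k)), F τ ≤
      ENNReal.ofReal ((Mnum d j : ℝ) +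
        ∑ i ∈ Finset.range k, (2:ℝ) ^ ((i:ℝ) * η) * (Nnum d (j+i) : ℝ)) * Xi := by
    intro k
    induction k with
    | zero =>
        simp only [Nat.add_zero, Finset.range_zero, Finset.sum_empty, add_zero]
        calc ∑ τ ∈ Finset.range (Mnum d j), F τ
            ≤ ∑ τ ∈ Finset.range (Mnum d j), ENNReal.ofReal (g τ) :=
              Finset.sum_le_sum fun τ _ => hF1 τ
          _ = ENNReal.ofReal (∑ τ ∈ Finset.range (Mnum d j), g τ) :=
              (ENNReal.ofReal_sum_of_nonneg fun τ _ => hg0 τ).symm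
          _ ≤ ENNReal.ofReal (Mnum d j : ℝ) * Xi := keyA
    | succ k ih =>
        have hsplit : ∑ τ ∈ Finset.range (Mnum d (j+(k+1))), F τ
            = ∑ τ ∈ Finset.range (Mnum d (j+k)), F τ
              + ∑ τ ∈ Finset.Ico (Mnum d (j+k)) (Mnum d (j+k+1)), F τ := by
          rw [show j + (k + 1) = j + k + 1 from by omega, Finset.range_eq_Ico,
            ← Finset.sum_Ico_consecutive F (Nat.zero_le (Mnum d (j+k)))
              (MnumMono d hd (Nat.lt_succ_self (j+k))).le]
          simp only [Finset.range_eq_Ico, Nat.succ_eq_add_one]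
        have hblk : ∑ τ ∈ Finset.Ico (Mnum d (j+k)) (Mnum d (j+k+1)), F τ
            ≤ ENNReal.ofReal ((2:ℝ) ^ ((k:ℝ) * η) * (Nnum d (j+k) : ℝ)) * Xi := by
          calc ∑ τ ∈ Finset.Ico (Mnum d (j+k)) (Mnum d (j+k+1)), F τ
              ≤ ∑ τ ∈ Finset.Ico (Mnum d (j+k)) (Mnum d (j+k+1)),
                  ENNReal.ofReal ((2:ℝ) ^ ((k:ℝ) * η) * g τ) :=
                Finset.sum_le_sum fun τ hτ => hF2 k τ (Finset.mem_Ico.mp hτ).1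
            _ = ENNReal.ofReal ((2:ℝ) ^ ((k:ℝ) * η) *
                  ∑ τ ∈ Finset.Ico (Mnum d (j+k)) (Mnum d (j+k+1)), g τ) := by
                rw [Finset.mul_sum]
                exact (ENNReal.ofReal_sum_of_nonneg fun τ _ =>
                  mul_nonneg (Real.rpow_nonneg (by norm_num) _) (hg0 τ)).symm
            _ = ENNReal.ofReal ((2:ℝ) ^ ((k:ℝ) * η)) *
                  ENNReal.ofReal (∑ τ ∈ Finset.Ico (Mnum d (j+k)) (Mnum d (j+k+1)), g τ) :=
                ENNReal.ofReal_mul (Real.rpow_nonneg (by norm_num) _)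
            _ ≤ ENNReal.ofReal ((2:ℝ) ^ ((k:ℝ) * η)) *
                  (ENNReal.ofReal (Nnum d (j+k) : ℝ) * Xi) :=
                mul_le_mul_right (keyB k) _
            _ = ENNReal.ofReal ((2:ℝ) ^ ((k:ℝ) * η) * (Nnum d (j+k) : ℝ)) * Xi := by
                rw [ENNReal.ofReal_mul (Real.rpow_nonneg (by norm_num) _), mul_assoc]
        calc ∑ τ ∈ Finset.range (Mnum d (j+(k+1))), F τ
            ≤ ENNReal.ofReal ((Mnum d j : ℝ) +
                ∑ i ∈ Finset.range k, (2:ℝ) ^ ((i:ℝ) * η) * (Nnum d (j+i) : ℝ)) * Xi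
              + ENNReal.ofReal ((2:ℝ) ^ ((k:ℝ) * η) * (Nnum d (j+k) : ℝ)) * Xi := by
              rw [hsplit]; exact add_le_add ih hblk
          _ = ENNReal.ofReal ((Mnum d j : ℝ) +
                ∑ i ∈ Finset.range (k+1), (2:ℝ) ^ ((i:ℝ) * η) * (Nnum d (j+i) : ℝ)) * Xi := by
              rw [← add_mul, ← ENNReal.ofReal_add (by positivity) (by positivity),
                Finset.sum_range_succ, add_assoc]
  -- the coefficient bound
  have hMj : ∀ j' : ℕ, (Mnum d j' : ℝ) ≤ (3:ℝ)^d * ((2:ℝ)^j')^d := by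
    intro j'
    have hn : Mnum d j' ≤ (3 * 2^j')^d := by
      apply Nat.pow_le_pow_left
      have : 1 ≤ (2:ℕ)^j' := Nat.one_le_two_pow
      calc 2^(j'+1) + 1 = 2*2^j' + 1 := by rw [pow_succ]; ring
        _ ≤ 3 * 2^j' := by omega
    calc (Mnum d j' : ℝ) ≤ ((3 * 2^j')^d : ℕ) := by exact_mod_cast hn
      _ = (3:ℝ)^d * ((2:ℝ)^j')^d := by push_cast [mul_pow]; ring
  have hcoef : ∀ k : ℕ, (Mnum d j : ℝ) +
      ∑ i ∈ Finset.range k, (2:ℝ) ^ ((i:ℝ) * η) * (Nnum d (j+i) : ℝ)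
      ≤ (2:ℝ) ^ ((j:ℝ) * d) * C₀ := by
    intro k
    have hD : ((2:ℝ)^j)^d = (2:ℝ) ^ ((j:ℝ) * (d:ℝ)) := by
      rw [← Real.rpow_natCast ((2:ℝ)^j) d, ← Real.rpow_natCast 2 j,
        ← Real.rpow_mul (by norm_num : (0:ℝ) ≤ 2)]
    have hterm : ∀ i : ℕ, (2:ℝ) ^ ((i:ℝ) * η) * (Nnum d (j+i) : ℝ)
        ≤ (3:ℝ)^d * (2:ℝ) ^ ((j:ℝ) * d) * 2^d * x^i := by
      intro i
      have hN : (Nnum d (j+i) : ℝ) ≤ (Mnum d (j+i+1) : ℝ) := by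
        have : Nnum d (j+i) ≤ Mnum d (j+i+1) := Nat.sub_le _ _
        exact_mod_cast this
      have h1 : (2:ℝ) ^ ((i:ℝ) * η) * (Nnum d (j+i) : ℝ)
          ≤ (2:ℝ) ^ ((i:ℝ) * η) * ((3:ℝ)^d * ((2:ℝ)^(j+i+1))^d) := by
        apply mul_le_mul_of_nonneg_left _ (Real.rpow_nonneg (by norm_num) _)
        exact hN.trans (hMj (j+i+1))
      refine h1.trans (le_of_eq ?_)
      have h2 : ((2:ℝ)^(j+i+1))^d = (2:ℝ) ^ (((j:ℝ)+(i:ℝ)+1) * (d:ℝ)) := by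
        rw [← Real.rpow_natCast ((2:ℝ)^(j+i+1)) d, ← Real.rpow_natCast 2 (j+i+1),
          ← Real.rpow_mul (by norm_num : (0:ℝ) ≤ 2)]
        push_cast
        ring_nf
      have h3 : x^i = (2:ℝ) ^ ((i:ℝ) * (η + (d:ℝ))) := by
        rw [hxdef, ← Real.rpow_natCast ((2:ℝ) ^ (η + (d:ℝ))) i,
          ← Real.rpow_mul (by norm_num : (0:ℝ) ≤ 2)]
        ring_nf
      have h4 : ((2:ℝ)^d : ℝ) = (2:ℝ) ^ ((d:ℕ):ℝ) := (Real.rpow_natCast 2 d).symm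
      have hrm : ∀ a b : ℝ, (2:ℝ)^a * (2:ℝ)^b = (2:ℝ)^(a+b) :=
        fun a b => (Real.rpow_add two_pos a b).symm
      rw [h2, h3, h4]
      calc (2:ℝ) ^ ((i:ℝ) * η) * ((3:ℝ)^d * (2:ℝ) ^ (((j:ℝ)+(i:ℝ)+1) * (d:ℝ)))
          = (3:ℝ)^d * ((2:ℝ) ^ ((i:ℝ) * η) * (2:ℝ) ^ (((j:ℝ)+(i:ℝ)+1) * (d:ℝ))) := by ring
        _ = (3:ℝ)^d * (2:ℝ) ^ ((i:ℝ) * η + ((j:ℝ)+(i:ℝ)+1) * (d:ℝ)) := by rw [hrm]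
        _ = (3:ℝ)^d * (2:ℝ) ^ ((j:ℝ) * (d:ℝ) + (((d:ℕ):ℝ) + (i:ℝ) * (η + (d:ℝ)))) := by
            congr 1
            push_cast
            ring
        _ = (3:ℝ)^d * ((2:ℝ) ^ ((j:ℝ) * (d:ℝ)) * ((2:ℝ) ^ (((d:ℕ):ℝ)) * (2:ℝ) ^ ((i:ℝ) * (η + (d:ℝ))))) := by
            rw [hrm, hrm]
        _ = (3:ℝ)^d * (2:ℝ) ^ ((j:ℝ) * (d:ℝ)) * (2:ℝ) ^ (((d:ℕ):ℝ)) * (2:ℝ) ^ ((i:ℝ) * (η + (d:ℝ))) := by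
            ring
    have hgeom : ∑ i ∈ Finset.range k, x^i ≤ (1-x)⁻¹ := by
      have h1 := Summable.sum_le_tsum (Finset.range k) (fun i _ => pow_nonneg hx0.le i)
        (summable_geometric_of_lt_one hx0.le hx1)
      rwa [tsum_geometric_of_lt_one hx0.le hx1] at h1
    have hsum : ∑ i ∈ Finset.range k, (2:ℝ) ^ ((i:ℝ) * η) * (Nnum d (j+i) : ℝ)
        ≤ (3:ℝ)^d * (2:ℝ) ^ ((j:ℝ) * d) * 2^d * (1-x)⁻¹ := by
      calc ∑ i ∈ Finset.range k, (2:ℝ) ^ ((i:ℝ) * η) * (Nnum d (j+i) : ℝ)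
          ≤ ∑ i ∈ Finset.range k, (3:ℝ)^d * (2:ℝ) ^ ((j:ℝ) * d) * 2^d * x^i :=
            Finset.sum_le_sum fun i _ => hterm i
        _ = (3:ℝ)^d * (2:ℝ) ^ ((j:ℝ) * d) * 2^d * ∑ i ∈ Finset.range k, x^i := by
            rw [← Finset.mul_sum]
        _ ≤ (3:ℝ)^d * (2:ℝ) ^ ((j:ℝ) * d) * 2^d * (1-x)⁻¹ := by
            apply mul_le_mul_of_nonneg_left hgeom
            positivity
    have hMj' : (Mnum d j : ℝ) ≤ (3:ℝ)^d * (2:ℝ) ^ ((j:ℝ) * d) := by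
      have := hMj j
      rwa [hD] at this
    rw [hC₀def]
    calc (Mnum d j : ℝ) + ∑ i ∈ Finset.range k, (2:ℝ) ^ ((i:ℝ) * η) * (Nnum d (j+i) : ℝ)
        ≤ (3:ℝ)^d * (2:ℝ) ^ ((j:ℝ) * d) + (3:ℝ)^d * (2:ℝ) ^ ((j:ℝ) * d) * 2^d * (1-x)⁻¹ :=
          add_le_add hMj' hsum
      _ = (2:ℝ) ^ ((j:ℝ) * d) * ((3:ℝ)^d * (1 + 2^d * (1 - x)⁻¹)) := by ring
  -- main tsum bound
  have hmain : (∑' τ, F τ) ≤ ENNReal.ofReal ((2:ℝ) ^ ((j:ℝ) * d) * C₀) * Xi := by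
    rw [ENNReal.tsum_eq_iSup_sum]
    refine iSup_le fun s => ?_
    obtain ⟨n, hn⟩ : ∃ n, s ⊆ Finset.range n :=
      ⟨(s.sup id) + 1, fun y hy => Finset.mem_range.mpr (Nat.lt_succ_of_le (Finset.le_sup (f := id) hy))⟩
    have hnM : Finset.range n ⊆ Finset.range (Mnum d (j + n)) := by
      apply Finset.range_subset_range.mpr
      apply le_of_lt
      calc n < 2^n := Nat.lt_two_pow_self
        _ ≤ 2^(j+n+1) := Nat.pow_le_pow_right (by norm_num) (by omega)
        _ ≤ 2^(j+n+1)+1 := Nat.le_succ _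
        _ ≤ Mnum d (j+n) := Nat.le_self_pow hd.ne' _
    calc ∑ τ ∈ s, F τ ≤ ∑ τ ∈ Finset.range (Mnum d (j+n)), F τ :=
          Finset.sum_le_sum_of_subset (hn.trans hnM)
      _ ≤ ENNReal.ofReal ((Mnum d j : ℝ) +
            ∑ i ∈ Finset.range n, (2:ℝ) ^ ((i:ℝ) * η) * (Nnum d (j+i) : ℝ)) * Xi := hstep n
      _ ≤ ENNReal.ofReal ((2:ℝ) ^ ((j:ℝ) * d) * C₀) * Xi :=
          mul_le_mul_left (ENNReal.ofReal_le_ofReal (hcoef n)) _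
  -- pointwise identity
  set E := (2:ℝ) ^ ((j:ℝ) * (μ' / max r p) * (1 - δ) * p) with hEdef
  have hE0 : (0:ℝ) < E := Real.rpow_pos_of_pos two_pos _
  have hid : ∀ τ : ℕ,
      (1 + znorm (φ τ) / 2 ^ j) ^ (β * p) * lam j t (φ τ) * |ξ j t (φ τ)| ^ p
      = E * ((1 + znorm (φ τ) / 2 ^ j) ^ η * g τ) := by
    intro τ
    set y := 1 + znorm (φ τ) / 2 ^ j with hydef
    have hy : (0:ℝ) < y := y_pos (φ τ) j
    set a := (2:ℝ) ^ ((j:ℝ) * μ') with hadef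
    have ha : (0:ℝ) < a := Real.rpow_pos_of_pos two_pos _
    have h1 : rhoB d μ' ν j (φ τ) ^ (p / max r p * (δ - 1))
        = (2:ℝ) ^ ((j:ℝ) * μ' * (p / max r p * (δ - 1))) * y ^ (ν * (p / max r p * (δ - 1))) := by
      rw [rhoB, Real.mul_rpow ha.le (Real.rpow_nonneg hy.le ν),
        ← Real.rpow_mul hy.le, ← Real.rpow_mul (by norm_num : (0:ℝ) ≤ 2)]
    have h2 : E * (2:ℝ) ^ ((j:ℝ) * μ' * (p / max r p * (δ - 1))) = 1 := by
      rw [hEdef, ← Real.rpow_add two_pos]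
      rw [show (j:ℝ) * (μ' / max r p) * (1 - δ) * p + (j:ℝ) * μ' * (p / max r p * (δ - 1)) = 0
        from by ring]
      exact Real.rpow_zero 2
    have h3 : y ^ η * y ^ (ν * (p / max r p * (δ - 1))) = y ^ (β * p) := by
      rw [← Real.rpow_add hy]
      congr 1
      rw [hηdef]; ring
    rw [hgdef]
    simp only []
    rw [h1]
    calc y ^ (β * p) * lam j t (φ τ) * |ξ j t (φ τ)| ^ p
        = (E * (2:ℝ) ^ ((j:ℝ) * μ' * (p / max r p * (δ - 1)))) *
            (y ^ η * y ^ (ν * (p / max r p * (δ - 1)))) * lam j t (φ τ) * |ξ j t (φ τ)| ^ p := by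
          rw [h2, h3]; ring
      _ = E * (y ^ η * ((2:ℝ) ^ ((j:ℝ) * μ' * (p / max r p * (δ - 1))) *
            y ^ (ν * (p / max r p * (δ - 1))) * lam j t (φ τ) * |ξ j t (φ τ)| ^ p)) := by ring
  -- assemble
  have hre : (∑' m : Fin d → ℤ, ENNReal.ofReal
        ((1 + znorm m / 2 ^ j) ^ (β * p) * lam j t m * |ξ j t m| ^ p))
      = ENNReal.ofReal E * ∑' τ, F τ := by
    rw [← (Equiv.ofBijective φ hbij).tsum_eq, ← ENNReal.tsum_mul_left]
    apply tsum_congr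
    intro τ
    rw [hFdef]
    simp only [Equiv.ofBijective_apply]
    rw [← ENNReal.ofReal_mul hE0.le, hid τ]
  rw [hre]
  calc (ENNReal.ofReal E * ∑' τ, F τ) ^ (1/p)
      ≤ (ENNReal.ofReal E * (ENNReal.ofReal ((2:ℝ) ^ ((j:ℝ) * d) * C₀) * Xi)) ^ (1/p) :=
        ENNReal.rpow_le_rpow (mul_le_mul_right hmain _) (by positivity)
    _ = (ENNReal.ofReal (E * ((2:ℝ) ^ ((j:ℝ) * d) * C₀)) * Xi) ^ (1/p) := by
        rw [← mul_assoc, ← ENNReal.ofReal_mul hE0.le]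
    _ = ENNReal.ofReal (E * ((2:ℝ) ^ ((j:ℝ) * d) * C₀)) ^ (1/p) * Xi ^ (1/p) :=
        ENNReal.mul_rpow_of_nonneg _ _ (by positivity)
    _ = ENNReal.ofReal ((E * ((2:ℝ) ^ ((j:ℝ) * d) * C₀)) ^ (1/p)) * Xi ^ (1/p) := by
        rw [ENNReal.ofReal_rpow_of_pos (by positivity)]
    _ = ENNReal.ofReal (C₀ ^ (1/p)) *
          ENNReal.ofReal ((2 : ℝ) ^ ((j : ℝ) * d / p + (j : ℝ) * (μ' / max r p) * (1 - δ))) *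
          Xi ^ (1/p) := by
        rw [← ENNReal.ofReal_mul (by positivity)]
        congr 2
        rw [hEdef, ← mul_assoc, ← Real.rpow_add two_pos,
          Real.mul_rpow (Real.rpow_nonneg (by norm_num) _) hC₀.le,
          ← Real.rpow_mul (by norm_num : (0:ℝ) ≤ 2)]
        rw [show ((j:ℝ) * (μ' / max r p) * (1 - δ) * p + (j:ℝ) * d) * (1/p)
            = (j:ℝ) * d / p + (j:ℝ) * (μ' / max r p) * (1 - δ) from by
          field_simp
          ring]
        ring

end
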